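/- arXiv:2508.13038 — 2 statements merged into one kernel-verified Lean document; each statement's English description precedes it below -/
import Mathlib

section
/- Let Y be a metric space and K ⊆ Y a nonempty compact subset. Suppose V := Y \ K is dense in Y and every point of V is isolated in Y. Let π : V → K be a map with dist(v, π(v)) = inf{dist(v, k) : k ∈ K} for all v ∈ V. Suppose K = U₁ ∪ U₂ where U₁ and U₂ are nonempty, disjoint, and open in the subspace topology of K. Set Dᵢ := π⁻¹(Uᵢ) for i = 1, 2. Then D₁ and D₂ are nonempty and disjoint, V = D₁ ∪ D₂, and the closure of Dᵢ in Y equals Dᵢ ∪ Uᵢ for i = 1, 2. -/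
/-!
A nearest point `π v` of `v` is within `2 * dist v k` of every `k ∈ K`, so `π` tends to `k`
along points of `V` approaching `k`. Hence each `Dᵢ` contains all points of `V` near `Uᵢ`:
together with density of `V` this puts `Uᵢ` in the closure of `Dᵢ`, and it keeps `Uⱼ` out of
the closure of `Dᵢ` for `j ≠ i`. Points of `V` are isolated, so they lie in the closure of
`Dᵢ` only if they lie in `Dᵢ`.
-/

open Filter Metric Set Topology

theorem mem_of_mem_closure_of_isOpen_singleton {X : Type*} [TopologicalSpace X] {s : Set X}
    {y : X} (hy : IsOpen ({y} : Set X)) (hys : y ∈ closure s) : y ∈ s := by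
  obtain ⟨z, rfl, hz⟩ := mem_closure_iff.1 hys {y} hy rfl
  exact hz

section NearestPoint

variable {X : Type*} [PseudoMetricSpace X] {K V : Set X} {π : X → X}

theorem dist_le_two_mul_dist_of_dist_eq_infDist {x p k : X} (hp : dist x p = infDist x K)
    (hk : k ∈ K) : dist p k ≤ 2 * dist x k :=
  calc dist p k ≤ dist x p + dist x k := dist_triangle_left _ _ _
    _ = infDist x K + dist x k := by rw [hp]
    _ ≤ 2 * dist x k := by linarith [infDist_le_dist_of_mem (x := x) hk]

theorem tendsto_nhdsWithin_of_dist_eq_infDist (hπd : ∀ v ∈ V, dist v (π v) = infDist v K)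
    {k : X} (hk : k ∈ K) : Tendsto π (𝓝[V] k) (𝓝 k) := by
  rw [tendsto_iff_dist_tendsto_zero]
  have hdist : Tendsto (fun v => 2 * dist v k) (𝓝[V] k) (𝓝 0) := by
    have h := ((tendsto_id (x := 𝓝 k)).dist (tendsto_const_nhds (x := k))).const_mul 2
    simpa using h.mono_left (nhdsWithin_le_nhds (s := V))
  refine squeeze_zero' (Eventually.of_forall fun _ => dist_nonneg) ?_ hdist
  filter_upwards [self_mem_nhdsWithin] with v hv
  exact dist_le_two_mul_dist_of_dist_eq_infDist (hπd v hv) hk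

variable (hπK : ∀ v ∈ V, π v ∈ K) (hπd : ∀ v ∈ V, dist v (π v) = infDist v K)
include hπK hπd

theorem setOf_mem_preimage_mem_nhdsWithin {O : Set X} (hO : IsOpen O) {k : X}
    (hk : k ∈ O ∩ K) : {v ∈ V | π v ∈ O ∩ K} ∈ 𝓝[V] k := by
  filter_upwards [self_mem_nhdsWithin,
    tendsto_nhdsWithin_of_dist_eq_infDist hπd hk.2 (hO.mem_nhds hk.1)] with v hv hvO
  exact ⟨hv, hvO, hπK v hv⟩

theorem subset_closure_setOf_mem_preimage (hVdense : Dense V) {O : Set X} (hO : IsOpen O) :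
    O ∩ K ⊆ closure {v ∈ V | π v ∈ O ∩ K} := by
  intro k hk
  have : (𝓝[V] k).NeBot := mem_closure_iff_nhdsWithin_neBot.1 (hVdense k)
  exact mem_closure_of_tendsto (tendsto_id.mono_left nhdsWithin_le_nhds)
    (setOf_mem_preimage_mem_nhdsWithin hπK hπd hO hk)

theorem disjoint_closure_setOf_mem_preimage {U O : Set X} (hO : IsOpen O)
    (hUO : Disjoint U (O ∩ K)) : Disjoint (closure {v ∈ V | π v ∈ U}) (O ∩ K) := by
  refine disjoint_left.2 fun y hy hyO => ?_
  obtain ⟨t, ht, htV⟩ := mem_nhdsWithin_iff_exists_mem_nhds_inter.1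
    (setOf_mem_preimage_mem_nhdsWithin hπK hπd hO hyO)
  obtain ⟨z, hzt, hzV, hzU⟩ := mem_closure_iff_nhds.1 hy t ht
  exact disjoint_left.1 hUO hzU (htV ⟨hzt, hzV⟩).2

theorem closure_setOf_mem_preimage_eq (hVdense : Dense V)
    (hViso : ∀ v ∈ V, IsOpen ({v} : Set X)) (hVK : Vᶜ ⊆ K) {O O' : Set X} (hO : IsOpen O)
    (hO' : IsOpen O') (hUnion : O ∩ K ∪ O' ∩ K = K) (hdisj : Disjoint (O ∩ K) (O' ∩ K)) :
    closure {v ∈ V | π v ∈ O ∩ K} = {v ∈ V | π v ∈ O ∩ K} ∪ O ∩ K := by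
  refine (union_subset subset_closure
    (subset_closure_setOf_mem_preimage hπK hπd hVdense hO)).antisymm' fun y hy => ?_
  by_cases hyV : y ∈ V
  · exact Or.inl (mem_of_mem_closure_of_isOpen_singleton (hViso y hyV) hy)
  · rw [← hUnion] at hVK
    refine (hVK hyV).elim Or.inr fun hyO' => absurd hyO' ?_
    exact disjoint_left.1 (disjoint_closure_setOf_mem_preimage hπK hπd hO' hdisj) hy

end NearestPoint

theorem nearest_point_decomposition_general
    {Y : Type*} [MetricSpace Y] (K : Set Y)
    (V : Set Y) (hV : V = Kᶜ) (hVdense : Dense V)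
    (hViso : ∀ v ∈ V, IsOpen ({v} : Set Y))
    (π : Y → Y) (hπK : ∀ v ∈ V, π v ∈ K)
    (hπd : ∀ v ∈ V, dist v (π v) = Metric.infDist v K)
    (U₁ U₂ : Set Y) (hUnion : U₁ ∪ U₂ = K)
    (hU₁ne : U₁.Nonempty) (hU₂ne : U₂.Nonempty) (hdisj : Disjoint U₁ U₂)
    (hU₁open : ∃ O : Set Y, IsOpen O ∧ U₁ = O ∩ K)
    (hU₂open : ∃ O : Set Y, IsOpen O ∧ U₂ = O ∩ K) :
    ({v ∈ V | π v ∈ U₁}.Nonempty ∧ {v ∈ V | π v ∈ U₂}.Nonempty) ∧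
      Disjoint {v ∈ V | π v ∈ U₁} {v ∈ V | π v ∈ U₂} ∧
      V = {v ∈ V | π v ∈ U₁} ∪ {v ∈ V | π v ∈ U₂} ∧
      closure {v ∈ V | π v ∈ U₁} = {v ∈ V | π v ∈ U₁} ∪ U₁ ∧
      closure {v ∈ V | π v ∈ U₂} = {v ∈ V | π v ∈ U₂} ∪ U₂ := by
  obtain ⟨O₁, hO₁, rfl⟩ := hU₁open
  obtain ⟨O₂, hO₂, rfl⟩ := hU₂open
  have hVK : Vᶜ ⊆ K := by rw [hV, compl_compl]
  have hcover : V = {v ∈ V | π v ∈ O₁ ∩ K ∪ O₂ ∩ K} := by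
    rw [hUnion]
    exact (sep_eq_self_iff_mem_true.2 hπK).symm
  refine ⟨⟨?_, ?_⟩, (hdisj.preimage π).mono (fun _ h => h.2) (fun _ h => h.2), ?_, ?_, ?_⟩
  · exact closure_nonempty_iff.1
      (hU₁ne.mono (subset_closure_setOf_mem_preimage hπK hπd hVdense hO₁))
  · exact closure_nonempty_iff.1
      (hU₂ne.mono (subset_closure_setOf_mem_preimage hπK hπd hVdense hO₂))
  · exact hcover.trans sep_or
  · exact closure_setOf_mem_preimage_eq hπK hπd hVdense hViso hVK hO₁ hO₂ hUnion hdisj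
  · exact closure_setOf_mem_preimage_eq hπK hπd hVdense hViso hVK hO₂ hO₁
      ((union_comm _ _).trans hUnion) hdisj.symm

/-- Let `Y` be a metric space and `K ⊆ Y` a nonempty compact subset. Suppose
`V := Y \ K` is dense in `Y` and every point of `V` is isolated in `Y`. Let
`π : V → K` be a nearest-point projection onto `K`. If `K = U₁ ∪ U₂` with `U₁, U₂`
nonempty, disjoint and open in the subspace topology of `K`, and `Dᵢ := π⁻¹(Uᵢ)`,
then `D₁` and `D₂` are nonempty and disjoint, `V = D₁ ∪ D₂`, and the closure of
`Dᵢ` in `Y` equals `Dᵢ ∪ Uᵢ`. -/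
theorem nearest_point_decomposition
    {Y : Type*} [MetricSpace Y] (K : Set Y) (hK : IsCompact K) (hKne : K.Nonempty)
    (V : Set Y) (hV : V = Kᶜ) (hVdense : Dense V)
    (hViso : ∀ v ∈ V, IsOpen ({v} : Set Y))
    (π : Y → Y) (hπK : ∀ v ∈ V, π v ∈ K)
    (hπd : ∀ v ∈ V, dist v (π v) = Metric.infDist v K)
    (U₁ U₂ : Set Y) (hUnion : U₁ ∪ U₂ = K)
    (hU₁ne : U₁.Nonempty) (hU₂ne : U₂.Nonempty) (hdisj : Disjoint U₁ U₂)
    (hU₁open : ∃ O : Set Y, IsOpen O ∧ U₁ = O ∩ K)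
    (hU₂open : ∃ O : Set Y, IsOpen O ∧ U₂ = O ∩ K) :
    ({v ∈ V | π v ∈ U₁}.Nonempty ∧ {v ∈ V | π v ∈ U₂}.Nonempty) ∧
      Disjoint {v ∈ V | π v ∈ U₁} {v ∈ V | π v ∈ U₂} ∧
      V = {v ∈ V | π v ∈ U₁} ∪ {v ∈ V | π v ∈ U₂} ∧
      closure {v ∈ V | π v ∈ U₁} = {v ∈ V | π v ∈ U₁} ∪ U₁ ∧
      closure {v ∈ V | π v ∈ U₂} = {v ∈ V | π v ∈ U₂} ∪ U₂ :=
  nearest_point_decomposition_general K V hV hVdense hViso π hπK hπd U₁ U₂ hUnion hU₁ne hU₂ne hdisj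
    hU₁open hU₂open
end

section
/- Let Y and X be connected, locally finite simple graphs, and let a group H act on Y and on X by graph automorphisms, with the action of H on the vertices of Y transitive. Let f be an injective H-equivariant graph homomorphism from Y to X. Then f is a metrically proper embedding: for every n ∈ ℕ there exists m ∈ ℕ such that for all vertices u, v of Y, if d_X(f(u), f(v)) ≤ n then d_Y(u, v) ≤ m. -/
/-!
Balls of a locally finite graph are finite, so the vertices `v` with `f v` within distance `n`
of `f y₀` form a finite set and their distances to `y₀` are bounded by some `m`. Since `H` acts
by isometries on both graphs, commutes with `f`, and is transitive on `Y`, every pair `u, v`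
can be moved to a pair `y₀, v'` of this kind without changing either distance.
-/

namespace SimpleGraph

variable {V W : Type*} {G : SimpleGraph V} {G' : SimpleGraph W}

theorem Hom.edist_le (φ : G →g G') (u v : V) : G'.edist (φ u) (φ v) ≤ G.edist u v := by
  by_cases hr : G.Reachable u v
  · obtain ⟨p, hp⟩ := hr.exists_walk_length_eq_edist
    simpa [hp] using G'.edist_le (p.map φ)
  · simp [edist_eq_top_of_not_reachable hr]

theorem Iso.edist_eq (φ : G ≃g G') (u v : V) : G'.edist (φ u) (φ v) = G.edist u v :=
  le_antisymm (φ.toHom.edist_le u v) (by simpa using φ.symm.toHom.edist_le (φ u) (φ v))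

theorem Iso.dist_eq (φ : G ≃g G') (u v : V) : G'.dist (φ u) (φ v) = G.dist u v :=
  congrArg ENat.toNat (φ.edist_eq u v)

theorem dist_smul {H : Type*} [Group H] [MulAction H V]
    (haut : ∀ (h : H) (u v : V), G.Adj u v ↔ G.Adj (h • u) (h • v))
    (h : H) (u v : V) : G.dist (h • u) (h • v) = G.dist u v :=
  Iso.dist_eq ⟨MulAction.toPerm h, (haut h _ _).symm⟩ u v

theorem exists_edist_le_and_adj_of_edist_le_succ {c v : V} {n : ℕ}
    (h : G.edist c v ≤ n + 1) : ∃ w, G.edist c w ≤ n ∧ (v = w ∨ G.Adj w v) := by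
  by_cases hvc : v = c
  · exact ⟨c, by simp, .inl hvc⟩
  obtain ⟨p, hp⟩ := exists_walk_of_edist_ne_top (ne_top_of_le_ne_top (by simp) h)
  cases hq : p.reverse with
  | nil => exact absurd rfl hvc
  | cons hadj r =>
    refine ⟨_, ?_, .inr hadj.symm⟩
    have hlen : ((r.length + 1 : ℕ) : ℕ∞) ≤ n + 1 := by
      rw [← Walk.length_cons hadj r, ← hq, Walk.length_reverse, hp]
      exact h
    calc G.edist c _ = G.edist _ c := edist_comm
      _ ≤ r.length := edist_le r
      _ ≤ n := by exact_mod_cast Nat.le_of_succ_le_succ (by exact_mod_cast hlen)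

theorem finite_setOf_edist_le [G.LocallyFinite] (c : V) (n : ℕ) :
    {v | G.edist c v ≤ n}.Finite := by
  induction n with
  | zero => simp [edist_eq_zero_iff]
  | succ n ih =>
    refine (ih.biUnion fun w _ => (G.neighborSet w).toFinite.insert w).subset fun v hv => ?_
    obtain ⟨w, hw, hwv⟩ := exists_edist_le_and_adj_of_edist_le_succ (by exact_mod_cast hv)
    exact Set.mem_biUnion hw hwv

end SimpleGraph

open SimpleGraph

theorem equivariant_embedding_metrically_proper_general
    {VY VX : Type*} (Y : SimpleGraph VY) (X : SimpleGraph VX)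
    (hXconn : X.Connected)
    (hXlf : X.LocallyFinite)
    (H : Type*) [Group H] [MulAction H VY] [MulAction H VX]
    (hYaut : ∀ (h : H) (u v : VY), Y.Adj u v ↔ Y.Adj (h • u) (h • v))
    (hXaut : ∀ (h : H) (u v : VX), X.Adj u v ↔ X.Adj (h • u) (h • v))
    (htrans : ∀ u v : VY, ∃ h : H, h • u = v)
    (f : VY → VX) (hinj : Function.Injective f)
    (hequiv : ∀ (h : H) (u : VY), f (h • u) = h • f u) :
    ∀ n : ℕ, ∃ m : ℕ, ∀ u v : VY, X.dist (f u) (f v) ≤ n → Y.dist u v ≤ m := by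
  intro n
  rcases isEmpty_or_nonempty VY with hVY | ⟨⟨y₀⟩⟩
  · exact ⟨0, fun u => isEmptyElim u⟩
  have hS : (f ⁻¹' {x | X.edist (f y₀) x ≤ n}).Finite :=
    (X.finite_setOf_edist_le (f y₀) n).preimage hinj.injOn
  obtain ⟨m, hm⟩ := (hS.image (Y.dist y₀)).bddAbove
  refine ⟨m, fun u v huv => ?_⟩
  obtain ⟨h, rfl⟩ := htrans y₀ u
  have hv : X.edist (f y₀) (f (h⁻¹ • v)) ≤ n := by
    rw [← (hXconn _ _).coe_dist_eq_edist, ← dist_smul hXaut h, ← hequiv, ← hequiv, smul_inv_smul]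
    exact_mod_cast huv
  calc Y.dist (h • y₀) v = Y.dist y₀ (h⁻¹ • v) := by rw [← dist_smul hYaut h⁻¹, inv_smul_smul]
    _ ≤ m := hm ⟨_, hv, rfl⟩

/-- Let `Y` and `X` be connected, locally finite simple graphs on which a group `H`
acts by graph automorphisms, with the action on the vertices of `Y` transitive.
Any injective `H`-equivariant graph homomorphism `f : Y → X` is a metrically proper
embedding: for every `n` there is `m` such that `d_X(f u, f v) ≤ n` implies
`d_Y(u, v) ≤ m`. -/
theorem equivariant_embedding_metrically_proper
    {VY VX : Type*} (Y : SimpleGraph VY) (X : SimpleGraph VX)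
    (hYconn : Y.Connected) (hXconn : X.Connected)
    (hYlf : Y.LocallyFinite) (hXlf : X.LocallyFinite)
    (H : Type*) [Group H] [MulAction H VY] [MulAction H VX]
    (hYaut : ∀ (h : H) (u v : VY), Y.Adj u v ↔ Y.Adj (h • u) (h • v))
    (hXaut : ∀ (h : H) (u v : VX), X.Adj u v ↔ X.Adj (h • u) (h • v))
    (htrans : ∀ u v : VY, ∃ h : H, h • u = v)
    (f : VY → VX) (hinj : Function.Injective f)
    (hequiv : ∀ (h : H) (u : VY), f (h • u) = h • f u)
    (fhom : ∀ u v : VY, Y.Adj u v → X.Adj (f u) (f v)) :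
    ∀ n : ℕ, ∃ m : ℕ, ∀ u v : VY, X.dist (f u) (f v) ≤ n → Y.dist u v ≤ m :=
  equivariant_embedding_metrically_proper_general Y X hXconn hXlf H hYaut hXaut htrans f hinj hequiv
end
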